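/- If a standardly semilinear n-quasigroup f of order 4 has predicate f⟨x̄⟩ and π = (1,0,3,2), then for any single index i, f⟨x̄ with xᵢ replaced by π(xᵢ)⟩ = L⟨x̄⟩ − f⟨x̄⟩ for all x̄ ∈ {0,1,2,3}^{n+1}. -/
import Mathlib


/-- An `n`-ary quasigroup: uniquely invertible in each place. -/
def IsNQuasigroup {n : ℕ} {S : Type*} (f : (Fin n → S) → S) : Prop :=
  ∀ (i : Fin n) (x : Fin n → S), Function.Bijective fun a => f (Function.update x i a)

/-- Permutable reducibility (Definition 1.4). -/
def PermutablyReducible {n : ℕ} {S : Type*} (f : (Fin n → S) → S) : Prop :=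
  ∃ (m : ℕ) (_ : 2 ≤ m) (_ : m ≤ n - 1)
    (σ : Equiv.Perm (Fin n))
    (g : (Fin m → S) → S)
    (h : (Fin (n - m + 1) → S) → S),
    IsNQuasigroup g ∧ IsNQuasigroup h ∧
    ∀ x : Fin n → S,
      f x = h (Fin.cons (g fun k : Fin m => x (σ ⟨k.val, by have := k.isLt; omega⟩))
                 fun j : Fin (n - m) => x (σ ⟨m + j.val, by have := j.isLt; omega⟩))

/-- `l(0)=l(1)=0`, `l(2)=l(3)=1`. -/
def lmap : Fin 4 → ZMod 2 := ![0, 0, 1, 1]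

/-- Standardly semilinear: the predicate of `f` is pointwise `≤ L`. -/
def StdSemilinear {n : ℕ} (f : (Fin n → Fin 4) → Fin 4) : Prop :=
  ∀ x : Fin n → Fin 4, lmap (f x) = ∑ i, lmap (x i)

def Semilinear {n : ℕ} (f : (Fin n → Fin 4) → Fin 4) : Prop :=
  ∃ (g : (Fin n → Fin 4) → Fin 4) (τ₀ : Equiv.Perm (Fin 4)) (τ : Fin n → Equiv.Perm (Fin 4)),
    IsNQuasigroup g ∧ StdSemilinear g ∧ ∀ x, τ₀ (f x) = g fun i => τ i (x i)

noncomputable def PrincipalRetract {n k : ℕ} {S : Type*} (f : (Fin n → S) → S) (ι : Fin k → Fin n)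
    (c : Fin n → S) : (Fin k → S) → S :=
  fun y => f (Function.extend ι y c)

def IsBinaryQG {S : Type*} (h : S → S → S) : Prop :=
  (∀ a, Function.Bijective (h a)) ∧ ∀ b, Function.Bijective fun a => h a b

def CondA {n : ℕ} {C : Type*} (μ : Fin n → Fin n → C) : Prop :=
  ∀ a b c : Fin n, a ≠ b → a ≠ c → b ≠ c →
    μ a b = μ a c ∨ μ a b = μ b c ∨ μ a c = μ b c

def CondB {n : ℕ} {C : Type*} [DecidableEq C] (μ : Fin n → Fin n → C) : Prop :=
  ∀ a b c d : Fin n, a ≠ b → a ≠ c → a ≠ d → b ≠ c → b ≠ d → c ≠ d →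
    (∃ c₁ c₂ : C, c₁ ≠ c₂ ∧
      [μ a b, μ a c, μ a d, μ b c, μ b d, μ c d].count c₁ = 3 ∧
      [μ a b, μ a c, μ a d, μ b c, μ b d, μ c d].count c₂ = 3) →
    ((μ a b = μ a c ∧ μ a c = μ b c) ∨ (μ a b = μ a d ∧ μ a d = μ b d) ∨
     (μ a c = μ a d ∧ μ a d = μ c d) ∨ (μ b c = μ b d ∧ μ b d = μ c d))

def colorOf {n : ℕ} (f : (Fin n → Fin 4) → Fin 4) (i j : Fin n) : Fin 4 → Fin 4 → Fin 4 :=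
  fun a b => f fun t => if t = i then a else if t = j then b else 0

def Normalized {n : ℕ} (f : (Fin n → Fin 4) → Fin 4) : Prop :=
  ∀ (i : Fin n) (a : Fin 4), f (fun t => if t = i then a else 0) = a

def piPerm : Fin 4 → Fin 4 := ![1, 0, 3, 2]

lemma lmap_piPerm : ∀ a : Fin 4, lmap (piPerm a) = lmap a := by decide

lemma piPerm_ne : ∀ a : Fin 4, piPerm a ≠ a := by decide

lemma pairLemma2 : ∀ a b : Fin 4, lmap a = lmap b →
    (if piPerm a = b then (1:ℤ) else 0) = 1 - (if a = b then 1 else 0) := by decide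

lemma pairLemma3 : ∀ a b c : Fin 4, lmap a = lmap b → lmap b = lmap c → b ≠ c →
    (if a = c then (1:ℤ) else 0) = 1 - (if a = b then 1 else 0) := by decide

lemma zmod2_add : ∀ x y : ZMod 2, (x + y = 0 ↔ x = y) := by decide

/-- for a standardly semilinear `n`-quasigroup `f` of order 4,
applying `π = (1,0,3,2)` at a single place complements the predicate inside `L`:
`f⟨x̄ with π at i⟩ = L⟨x̄⟩ − f⟨x̄⟩` (in the integers). -/
theorem stmt16 {n : ℕ} (f : (Fin n → Fin 4) → Fin 4)
    (hq : IsNQuasigroup f) (hs : StdSemilinear f) (i : Fin (n + 1))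
    (z : Fin (n + 1) → Fin 4) :
    (if (Function.update z i (piPerm (z i))) 0
        = f (fun t : Fin n => (Function.update z i (piPerm (z i))) t.succ)
      then (1 : ℤ) else 0)
    = (if (∑ t, lmap (z t)) = (0 : ZMod 2) then (1 : ℤ) else 0)
      - (if z 0 = f (fun t : Fin n => z t.succ) then (1 : ℤ) else 0) := by
  rcases Fin.eq_zero_or_eq_succ i with rfl | ⟨j, rfl⟩
  · -- i = 0
    set b := f (fun t : Fin n => z t.succ) with hb
    have h1 : (fun t : Fin n => Function.update z 0 (piPerm (z 0)) t.succ)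
        = fun t : Fin n => z t.succ := by
      funext t
      simp [Function.update, Fin.succ_ne_zero]
    have h2 : Function.update z 0 (piPerm (z 0)) 0 = piPerm (z 0) := by simp
    rw [h1, h2, ← hb]
    have hsum : (∑ t, lmap (z t)) = lmap (z 0) + lmap b := by
      rw [Fin.sum_univ_succ, hs]
    by_cases h0 : (∑ t, lmap (z t)) = (0 : ZMod 2)
    · have hlm : lmap (z 0) = lmap b := (zmod2_add _ _).mp (hsum ▸ h0)
      rw [if_pos h0]
      exact pairLemma2 _ _ hlm
    · have hlm : lmap (z 0) ≠ lmap b := fun h => h0 (hsum ▸ (zmod2_add _ _).mpr h)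
      have hne1 : z 0 ≠ b := fun h => hlm (h ▸ rfl)
      have hne2 : piPerm (z 0) ≠ b := fun h => hlm (by rw [← h, lmap_piPerm])
      rw [if_neg h0, if_neg hne1, if_neg hne2]
      ring
  · -- i = j.succ
    set y := fun t : Fin n => z t.succ with hy
    set b := f y with hb
    set c := f (Function.update y j (piPerm (y j))) with hc
    have h2 : Function.update z j.succ (piPerm (z j.succ)) 0 = z 0 := by
      simp [Function.update, (Fin.succ_ne_zero j).symm]
    have h1 : (fun t : Fin n => Function.update z j.succ (piPerm (z j.succ)) t.succ)
        = Function.update y j (piPerm (y j)) := by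
      funext t
      simp only [Function.update, hy]
      by_cases ht : t = j
      · subst ht; simp
      · simp [ht, fun h => ht (Fin.succ_injective _ h)]
    rw [h1, h2]
    have hbc : b ≠ c := by
      intro h
      have := (hq j y).injective (a₁ := y j) (a₂ := piPerm (y j)) (by
        simpa [Function.update_eq_self] using h)
      exact piPerm_ne (y j) this.symm
    have hlbc : lmap b = lmap c := by
      rw [hb, hc, hs, hs]
      refine Finset.sum_congr rfl fun t _ => ?_
      by_cases ht : t = j
      · subst ht; simp [lmap_piPerm]
      · simp [Function.update, ht]
    have hsum : (∑ t, lmap (z t)) = lmap (z 0) + lmap b := by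
      rw [Fin.sum_univ_succ, hs]
    by_cases h0 : (∑ t, lmap (z t)) = (0 : ZMod 2)
    · have hlm : lmap (z 0) = lmap b := (zmod2_add _ _).mp (hsum ▸ h0)
      rw [if_pos h0]
      exact pairLemma3 _ _ _ hlm hlbc hbc
    · have hlm : lmap (z 0) ≠ lmap b := fun h => h0 (hsum ▸ (zmod2_add _ _).mpr h)
      have hne1 : z 0 ≠ b := fun h => hlm (h ▸ rfl)
      have hne2 : z 0 ≠ c := fun h => hlm (by rw [h, hlbc])
      rw [if_neg h0, if_neg hne1, if_neg hne2]
      ring
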